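/- arXiv:2205.12145 — 4 statements merged into one kernel-verified Lean document; each statement's English description precedes it below -/
import Mathlib

section
/- The measure Q is a stationary distribution for the environment process: for every bounded measurable function f : Ω_𝔎 → ℝ, one has ∫_{Ω_𝔎} Rf dQ = ∫_{Ω_𝔎} f dQ. -/
open MeasureTheory Filter

noncomputable section

/-- The lattice `ℤ^d`. -/
abbrev ZLat (d : ℕ) := Fin d → ℤ

/-- The space of uniformly elliptic environments. -/
abbrev EnvSpace (d K : ℕ) := ZLat d → (Set.Icc (2:ℤ) (K:ℤ) × Set.Icc (2:ℤ) (K:ℤ))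

/-- The shift `T j`. -/
def shiftT {d K : ℕ} (j : ZLat d) (e : EnvSpace d K) : EnvSpace d K := fun i => e (i + j)

/-- Size of the active population at `i`, as a real number. -/
def Nsize {d K : ℕ} (e : EnvSpace d K) (i : ZLat d) : ℝ := ((e i).1 : ℤ)

/-- Size of the dormant population at `i`, as a real number. -/
def Msize {d K : ℕ} (e : EnvSpace d K) (i : ZLat d) : ℝ := ((e i).2 : ℤ)

/-- Total migration rate `c := Σ_{i ≠ 0} a(0,i)`. -/
def cRate {d : ℕ} (a : ZLat d → ZLat d → ℝ) : ℝ := ∑' i : ZLat d, if i = 0 then 0 else a 0 i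

/-- The probability `q_s` of becoming dormant. -/
def qs {d : ℕ} (a : ZLat d → ZLat d → ℝ) (lam : ℝ) (K : ℕ) : ℝ :=
  lam / (cRate a + lam + lam * K)

/-- The step distribution `p̂`. -/
def phat {d : ℕ} (a : ZLat d → ZLat d → ℝ) (lam : ℝ) (K : ℕ) (i : ZLat d) : ℝ :=
  if i = 0 then lam * K / (cRate a + lam * K) else a 0 i / (cRate a + lam * K)

/-- The wake-up probabilities `ω_e(i)`. -/
def omegaE {d K : ℕ} (a : ZLat d → ZLat d → ℝ) (lam : ℝ) (e : EnvSpace d K) (i : ZLat d) : ℝ :=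
  lam * Nsize e i / (Msize e i * (cRate a + lam + lam * K))

/-- `n`-fold convolution power of a function on `ℤ^d`. -/
def convPow {d : ℕ} (p : ZLat d → ℝ) : ℕ → ZLat d → ℝ
  | 0 => fun i => if i = 0 then 1 else 0
  | n + 1 => fun i => ∑' j : ZLat d, convPow p n j * p (i - j)

/-- The Markov operator `R` of the auxiliary environment process. -/
def Rop {d K : ℕ} (a : ZLat d → ZLat d → ℝ) (lam : ℝ)
    (f : EnvSpace d K × Bool → ℝ) : EnvSpace d K × Bool → ℝ := fun x =>
  match x with
  | (e, true) => qs a lam K * f (e, false)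
      + (1 - qs a lam K) * ∑' j : ZLat d, phat a lam K j * f (shiftT j e, true)
  | (e, false) => omegaE a lam e 0 * f (e, true) + (1 - omegaE a lam e 0) * f (e, false)

/-- The strip `G = ℤ^d × {0,1}`. -/
abbrev Gstrip (d : ℕ) := ZLat d × Bool

/-- One-step transition kernel of the subordinate Markov chain in environment `e`. -/
def QK {d K : ℕ} (a : ZLat d → ZLat d → ℝ) (lam : ℝ) (e : EnvSpace d K) :
    Gstrip d → Gstrip d → ℝ
  | (i, true), (j, true) => (1 - qs a lam K) * phat a lam K (j - i)
  | (i, true), (j, false) => if j = i then qs a lam K else 0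
  | (i, false), (j, true) => if j = i then omegaE a lam e i else 0
  | (i, false), (j, false) => if j = i then 1 - omegaE a lam e i else 0

/-- `n`-step transition kernel of the subordinate Markov chain. -/
def QKn {d K : ℕ} (a : ZLat d → ZLat d → ℝ) (lam : ℝ) (e : EnvSpace d K) :
    ℕ → Gstrip d → Gstrip d → ℝ
  | 0 => fun η ξ => if ξ = η then 1 else 0
  | n + 1 => fun η ξ => ∑' ζ : Gstrip d, QKn a lam e n η ζ * QK a lam e ζ ξ

/-- Time-`t` transition kernel of the single-particle dual (uniformization representation). -/
def ptk {d K : ℕ} (a : ZLat d → ZLat d → ℝ) (lam : ℝ) (e : EnvSpace d K) (t : ℝ)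
    (η ξ : Gstrip d) : ℝ :=
  Real.exp (-((cRate a + lam + lam * K) * t)) *
    ∑' n : ℕ, ((cRate a + lam + lam * K) * t) ^ n / (n.factorial : ℝ) * QKn a lam e n η ξ

end

/-!
On each layer `Q` has a density with respect to `P̄`: `1` on the active layer and `M₀/N₀` on the
dormant one, so `∫ g dQ` is proportional to `∫ (g(e,1) + (M₀/N₀) g(e,0)) dP̄`. On the active
layer the migration part of `R` averages the shifts `f ∘ T_j`, and `P̄` is shift-invariant, so it
integrates to `(1 - q_s) ∫ f(·,1) dP̄`. On the dormant layer `ω_e(0) · M₀/N₀ = q_s`: the flow `q_s`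
into dormancy is balanced exactly by the wake-up flow, and the two layers add up to `∫ f dQ`.
-/

theorem Measurable.tsum_of_summable {α ι : Type*} [MeasurableSpace α] [Countable ι]
    {F : ι → α → ℝ} (hF : ∀ i, Measurable (F i)) (hs : ∀ x, Summable fun i => F i x) :
    Measurable fun x => ∑' i, F i x := by
  classical
  exact measurable_of_tendsto_metrizable' atTop
    (fun s => Finset.measurable_sum s fun i _ => hF i)
    (tendsto_pi_nhds.2 fun x => (hs x).hasSum)

theorem abs_mul_add_one_sub_mul_le {t x y C : ℝ} (ht₀ : 0 ≤ t) (ht₁ : t ≤ 1)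
    (hx : |x| ≤ C) (hy : |y| ≤ C) : |t * x + (1 - t) * y| ≤ C := by
  rw [abs_le] at *
  constructor <;> nlinarith [hx.1, hx.2, hy.1, hy.2]

section WeightedShift

variable {α ι : Type*} {p : ι → ℝ} {T : ι → α → α} {h : α → ℝ} {C : ℝ}

theorem summable_mul_comp_of_abs_le (hp : Summable p) (hh : ∀ x, |h x| ≤ C) (x : α) :
    Summable fun i => p i * h (T i x) :=
  Summable.of_norm_bounded (hp.abs.mul_right C) fun i => by
    rw [Real.norm_eq_abs, abs_mul]
    exact mul_le_mul_of_nonneg_left (hh _) (abs_nonneg _)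

theorem abs_tsum_mul_comp_le (hp₀ : ∀ i, 0 ≤ p i) (hp : HasSum p 1) (hh : ∀ x, |h x| ≤ C)
    (x : α) : |∑' i, p i * h (T i x)| ≤ C := by
  have hs := summable_mul_comp_of_abs_le (T := T) hp.summable hh x
  rw [abs_le]
  constructor
  · calc -C = ∑' i, p i * -C := by rw [tsum_mul_right, hp.tsum_eq, one_mul]
      _ ≤ ∑' i, p i * h (T i x) := (hp.summable.mul_right _).tsum_le_tsum
          (fun i => mul_le_mul_of_nonneg_left (abs_le.1 (hh _)).1 (hp₀ i)) hs
  · calc ∑' i, p i * h (T i x) ≤ ∑' i, p i * C := hs.tsum_le_tsum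
          (fun i => mul_le_mul_of_nonneg_left (abs_le.1 (hh _)).2 (hp₀ i)) (hp.summable.mul_right _)
      _ = C := by rw [tsum_mul_right, hp.tsum_eq, one_mul]

theorem measurable_tsum_mul_comp [MeasurableSpace α] [Countable ι] (hp : Summable p)
    (hT : ∀ i, Measurable (T i)) (hm : Measurable h) (hh : ∀ x, |h x| ≤ C) :
    Measurable fun x => ∑' i, p i * h (T i x) :=
  Measurable.tsum_of_summable (fun i => (hm.comp (hT i)).const_mul (p i))
    (summable_mul_comp_of_abs_le hp hh)

theorem integral_tsum_mul_comp [MeasurableSpace α] [Countable ι] {μ : Measure α}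
    (hT : ∀ i, MeasurePreserving (T i) μ μ) (hp : Summable p) (hh : Integrable h μ) :
    ∫ x, ∑' i, p i * h (T i x) ∂μ = (∑' i, p i) * ∫ x, h x ∂μ := by
  have hinv : ∀ i (g : α → ℝ), AEStronglyMeasurable g μ → ∫ x, g (T i x) ∂μ = ∫ x, g x ∂μ :=
    fun i g hg => by
      conv_rhs => rw [← (hT i).map_eq]
      rw [integral_map (hT i).measurable.aemeasurable (by rwa [(hT i).map_eq])]
  rw [← integral_tsum_of_summable_integral_norm (F := fun i x => p i * h (T i x))
    (fun i => ((hT i).integrable_comp_of_integrable hh).const_mul (p i))]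
  · simp_rw [integral_const_mul, hinv _ _ hh.1, tsum_mul_right]
  · simp_rw [norm_mul, integral_const_mul, hinv _ _ hh.1.norm]
    exact hp.norm.mul_right _

end WeightedShift

section ProdBool

variable {α : Type*} [MeasurableSpace α]

theorem Measure.eq_map_add_map_of_prod_bool {μ : Measure (α × Bool)} {ν₁ ν₀ : Measure α}
    (h₁ : ∀ A, MeasurableSet A → μ (A ×ˢ {true}) = ν₁ A)
    (h₀ : ∀ A, MeasurableSet A → μ (A ×ˢ {false}) = ν₀ A) :
    μ = ν₁.map (·, true) + ν₀.map (·, false) := by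
  ext S hS
  have hsplit : S = ((·, true) ⁻¹' S) ×ˢ {true} ∪ ((·, false) ⁻¹' S) ×ˢ {false} := by
    ext ⟨x, b⟩; cases b <;> simp
  have hdisj : Disjoint (((·, true) ⁻¹' S : Set α) ×ˢ {true})
      (((·, false) ⁻¹' S : Set α) ×ˢ {false}) :=
    Set.disjoint_prod.2 (Or.inr (by simp))
  rw [Measure.add_apply, Measure.map_apply measurable_prodMk_right hS,
    Measure.map_apply measurable_prodMk_right hS, ← h₁ _ (measurable_prodMk_right hS),
    ← h₀ _ (measurable_prodMk_right hS), ← measure_union hdisj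
      ((measurable_prodMk_right hS).prod (measurableSet_singleton _)), ← hsplit]

theorem integral_map_add_map_prod_bool {E : Type*} [NormedAddCommGroup E] [NormedSpace ℝ E]
    {ν₁ ν₀ : Measure α} {g : α × Bool → E}
    (hg : Integrable g (ν₁.map (·, true) + ν₀.map (·, false))) :
    ∫ z, g z ∂(ν₁.map (·, true) + ν₀.map (·, false)) =
      ∫ x, g (x, true) ∂ν₁ + ∫ x, g (x, false) ∂ν₀ := by
  have hg₁ := hg.mono_measure (Measure.le_add_right le_rfl)
  have hg₀ := hg.mono_measure (Measure.le_add_left le_rfl)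
  rw [integral_add_measure hg₁ hg₀, integral_map measurable_prodMk_right.aemeasurable hg₁.1,
    integral_map measurable_prodMk_right.aemeasurable hg₀.1]

theorem integral_prod_bool_of_density {μ : Measure (α × Bool)} {P : Measure α} {c : ℝ}
    (hc : 0 ≤ c) {m : α → ℝ} (hm : Integrable m P) (hm₀ : ∀ x, 0 ≤ m x)
    (h₁ : ∀ A, MeasurableSet A → μ (A ×ˢ {true}) = ENNReal.ofReal c * P A)
    (h₀ : ∀ A, MeasurableSet A → μ (A ×ˢ {false}) = ENNReal.ofReal (c * ∫ x in A, m x ∂P))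
    {g : α × Bool → ℝ} (hg : Integrable g μ) :
    ∫ z, g z ∂μ = c * (∫ x, g (x, true) ∂P + ∫ x, m x * g (x, false) ∂P) := by
  have hμ : μ = (ENNReal.ofReal c • P).map (·, true) +
      (ENNReal.ofReal c • P.withDensity fun x => ENNReal.ofReal (m x)).map (·, false) := by
    refine Measure.eq_map_add_map_of_prod_bool h₁ fun A hA => ?_
    rw [h₀ A hA, Measure.smul_apply, withDensity_apply _ hA,
      ← ofReal_integral_eq_lintegral_ofReal hm.integrableOn (ae_of_all _ hm₀),
      ENNReal.ofReal_mul hc, smul_eq_mul]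
  rw [hμ] at hg ⊢
  rw [integral_map_add_map_prod_bool hg, integral_smul_measure, integral_smul_measure,
    integral_withDensity_eq_integral_toReal_smul₀ hm.aemeasurable.ennreal_ofReal
      (ae_of_all _ fun _ => ENNReal.ofReal_lt_top)]
  simp only [ENNReal.toReal_ofReal hc, ENNReal.toReal_ofReal (hm₀ _), smul_eq_mul, mul_add]

theorem integrable_comp_prodMk_of_abs_le {β : Type*} [MeasurableSpace β] {P : Measure α}
    [IsFiniteMeasure P] {f : α × β → ℝ} {C : ℝ} (hf : Measurable f) (hfC : ∀ z, |f z| ≤ C)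
    (b : β) : Integrable (fun x => f (x, b)) P :=
  .of_bound (hf.comp measurable_prodMk_right).aestronglyMeasurable C (ae_of_all _ fun _ => hfC _)

end ProdBool

section Model

variable {d K : ℕ} {a : ZLat d → ZLat d → ℝ} {lam : ℝ}

theorem cRate_nonneg (ha : ∀ i, 0 ≤ a 0 i) : 0 ≤ cRate a :=
  tsum_nonneg fun i => by split_ifs <;> simp [ha]

theorem qs_nonneg (hlam : 0 ≤ lam) (hc : 0 ≤ cRate a) : 0 ≤ qs a lam K := by
  unfold qs; positivity

theorem qs_le_one (hlam : 0 ≤ lam) (hc : 0 ≤ cRate a) : qs a lam K ≤ 1 :=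
  div_le_one_of_le₀ (by nlinarith [K.cast_nonneg (α := ℝ)]) (by positivity)

theorem phat_nonneg (hlam : 0 ≤ lam) (ha : ∀ i, 0 ≤ a 0 i) (i : ZLat d) :
    0 ≤ phat a lam K i := by
  have := cRate_nonneg ha
  unfold phat; split_ifs
  · positivity
  · exact div_nonneg (ha i) (by positivity)

theorem summable_phat (hs : Summable (a 0)) : Summable (phat a lam K) := by
  classical
  refine ((hs.update 0 (lam * K)).div_const (cRate a + lam * K)).congr fun i => ?_
  by_cases hi : i = 0 <;> simp [phat, hi]

theorem hasSum_phat (hlam : 0 < lam) (hK : 0 < K) (ha : ∀ i, 0 ≤ a 0 i)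
    (hs : Summable (a 0)) : HasSum (phat a lam K) 1 := by
  classical
  have hD : cRate a + lam * K ≠ 0 := by
    have := cRate_nonneg ha
    have : (0 : ℝ) < K := by exact_mod_cast hK
    positivity
  have hc : HasSum (fun i : ZLat d => if i = 0 then 0 else a 0 i) (cRate a) :=
    ((hs.update 0 0).congr fun i => by by_cases hi : i = 0 <;> simp [hi]).hasSum
  have hsum := ((hasSum_ite_eq (0 : ZLat d) (lam * K)).add hc).div_const (cRate a + lam * K)
  rw [add_comm (lam * K), div_self hD] at hsum
  have hphat : phat a lam K = fun i =>
      ((if i = 0 then lam * K else 0) + if i = 0 then 0 else a 0 i) / (cRate a + lam * K) := by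
    funext i; by_cases hi : i = 0 <;> simp [phat, hi]
  rwa [hphat]

theorem two_le_Nsize (e : EnvSpace d K) (i : ZLat d) : 2 ≤ Nsize e i := by
  unfold Nsize; exact_mod_cast (e i).1.2.1

theorem Nsize_le (e : EnvSpace d K) (i : ZLat d) : Nsize e i ≤ K := by
  unfold Nsize; exact_mod_cast (e i).1.2.2

theorem two_le_Msize (e : EnvSpace d K) (i : ZLat d) : 2 ≤ Msize e i := by
  unfold Msize; exact_mod_cast (e i).2.2.1

theorem Msize_le (e : EnvSpace d K) (i : ZLat d) : Msize e i ≤ K := by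
  unfold Msize; exact_mod_cast (e i).2.2.2

theorem measurable_Nsize (i : ZLat d) : Measurable fun e : EnvSpace d K => Nsize e i :=
  (Measurable.of_discrete (f := fun p : Set.Icc (2 : ℤ) K × Set.Icc (2 : ℤ) K =>
    ((p.1 : ℤ) : ℝ))).comp (measurable_pi_apply i)

theorem measurable_Msize (i : ZLat d) : Measurable fun e : EnvSpace d K => Msize e i :=
  (Measurable.of_discrete (f := fun p : Set.Icc (2 : ℤ) K × Set.Icc (2 : ℤ) K =>
    ((p.2 : ℤ) : ℝ))).comp (measurable_pi_apply i)

theorem measurable_shiftT (j : ZLat d) : Measurable (shiftT j : EnvSpace d K → EnvSpace d K) :=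
  measurable_pi_lambda _ fun i => measurable_pi_apply (i + j)

theorem measurePreserving_shiftT {P : Measure (EnvSpace d K)}
    (hP : ∀ (j : ZLat d) (A : Set (EnvSpace d K)), MeasurableSet A → P (shiftT j ⁻¹' A) = P A)
    (j : ZLat d) : MeasurePreserving (shiftT j) P P :=
  ⟨measurable_shiftT j, Measure.ext fun A hA => by
    rw [Measure.map_apply (measurable_shiftT j) hA, hP j A hA]⟩

-- The density of `Q` on the dormant layer relative to its active layer.
noncomputable def dormantDensity (e : EnvSpace d K) : ℝ := Msize e 0 / Nsize e 0

theorem dormantDensity_nonneg (e : EnvSpace d K) : 0 ≤ dormantDensity e :=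
  div_nonneg (by linarith [two_le_Msize e 0]) (by linarith [two_le_Nsize e 0])

theorem dormantDensity_le (e : EnvSpace d K) : dormantDensity e ≤ K :=
  div_le_of_le_mul₀ (by linarith [two_le_Nsize e 0]) (by positivity)
    (by nlinarith [two_le_Nsize e 0, Msize_le e 0])

theorem measurable_dormantDensity : Measurable (dormantDensity : EnvSpace d K → ℝ) :=
  (measurable_Msize 0).div (measurable_Nsize 0)

theorem integrable_dormantDensity (P : Measure (EnvSpace d K)) [IsFiniteMeasure P] :
    Integrable dormantDensity P :=
  Integrable.of_bound measurable_dormantDensity.aestronglyMeasurable K (ae_of_all _ fun e => by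
    rw [Real.norm_of_nonneg (dormantDensity_nonneg e)]; exact dormantDensity_le e)

theorem omegaE_nonneg (hlam : 0 ≤ lam) (hc : 0 ≤ cRate a) (e : EnvSpace d K) (i : ZLat d) :
    0 ≤ omegaE a lam e i := by
  have := two_le_Nsize e i; have := two_le_Msize e i
  unfold omegaE; positivity

theorem omegaE_le_one (hlam : 0 ≤ lam) (hc : 0 ≤ cRate a) (e : EnvSpace d K) (i : ZLat d) :
    omegaE a lam e i ≤ 1 := by
  have hN := Nsize_le e i; have hM := two_le_Msize e i
  unfold omegaE
  have hlamK : 0 ≤ lam * K := by positivity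
  have hM₁ : 0 ≤ Msize e i - 1 := by linarith
  have hM₀ : 0 ≤ Msize e i := by linarith
  refine div_le_one_of_le₀ ?_ (by positivity)
  nlinarith [mul_le_mul_of_nonneg_left hN hlam, mul_nonneg hM₁ hlamK,
    mul_nonneg hM₀ (add_nonneg hc hlam)]

theorem measurable_omegaE (i : ZLat d) :
    Measurable fun e : EnvSpace d K => omegaE a lam e i :=
  ((measurable_Nsize i).const_mul lam).div ((measurable_Msize i).mul_const _)

theorem omegaE_mul_dormantDensity (e : EnvSpace d K) :
    omegaE a lam e 0 * dormantDensity e = qs a lam K := by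
  have hN : Nsize e 0 ≠ 0 := by linarith [two_le_Nsize e 0]
  have hM : Msize e 0 ≠ 0 := by linarith [two_le_Msize e 0]
  unfold omegaE dormantDensity qs
  rw [div_mul_div_comm, mul_comm (Msize e 0), mul_right_comm, mul_div_mul_right _ _ hN,
    mul_div_mul_right _ _ hM]

end Model

section EnvironmentProcess

variable {d K : ℕ} {a : ZLat d → ZLat d → ℝ} {lam : ℝ} {f : EnvSpace d K × Bool → ℝ} {C : ℝ}

theorem abs_Rop_le (hlam : 0 < lam) (hK : 0 < K) (ha : ∀ i, 0 ≤ a 0 i) (hs : Summable (a 0))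
    (hf : ∀ x, |f x| ≤ C) (x : EnvSpace d K × Bool) : |Rop a lam f x| ≤ C := by
  have hc := cRate_nonneg ha
  obtain ⟨e, _ | _⟩ := x
  · exact abs_mul_add_one_sub_mul_le (omegaE_nonneg hlam.le hc e 0)
      (omegaE_le_one hlam.le hc e 0) (hf _) (hf _)
  · exact abs_mul_add_one_sub_mul_le (qs_nonneg hlam.le hc) (qs_le_one hlam.le hc) (hf _)
      (abs_tsum_mul_comp_le (h := fun e => f (e, true)) (phat_nonneg hlam.le ha)
        (hasSum_phat hlam hK ha hs) (fun e => hf (e, true)) e)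

theorem measurable_Rop (hs : Summable (a 0)) (hf : Measurable f) (hfC : ∀ x, |f x| ≤ C) :
    Measurable (Rop a lam f) := by
  refine measurable_from_prod_countable_left fun b => ?_
  cases b
  · exact ((measurable_omegaE 0).mul (hf.comp measurable_prodMk_right)).add
      ((measurable_const.sub (measurable_omegaE 0)).mul (hf.comp measurable_prodMk_right))
  · exact ((hf.comp measurable_prodMk_right).const_mul _).add
      ((measurable_tsum_mul_comp (summable_phat hs) measurable_shiftT
        (hf.comp measurable_prodMk_right) fun e => hfC (e, true)).const_mul _)

theorem integral_Rop_true (hlam : 0 < lam) (hK : 0 < K) (ha : ∀ i, 0 ≤ a 0 i)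
    (hs : Summable (a 0)) {P : Measure (EnvSpace d K)} [IsFiniteMeasure P]
    (hP : ∀ j, MeasurePreserving (shiftT j) P P) (hf : Measurable f) (hfC : ∀ x, |f x| ≤ C) :
    ∫ e, Rop a lam f (e, true) ∂P =
      qs a lam K * ∫ e, f (e, false) ∂P + (1 - qs a lam K) * ∫ e, f (e, true) ∂P := by
  have hf₁ := integrable_comp_prodMk_of_abs_le (P := P) hf hfC true
  have hf₀ := integrable_comp_prodMk_of_abs_le (P := P) hf hfC false
  have hS : Integrable (fun e => ∑' j, phat a lam K j * f (shiftT j e, true)) P :=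
    .of_bound (measurable_tsum_mul_comp (summable_phat hs) measurable_shiftT
        (hf.comp measurable_prodMk_right) fun e => hfC (e, true)).aestronglyMeasurable C
      (ae_of_all _ (abs_tsum_mul_comp_le (h := fun e => f (e, true)) (phat_nonneg hlam.le ha)
        (hasSum_phat hlam hK ha hs) fun e => hfC (e, true)))
  change ∫ e, qs a lam K * f (e, false) +
    (1 - qs a lam K) * ∑' j, phat a lam K j * f (shiftT j e, true) ∂P = _
  rw [integral_add (hf₀.const_mul _) (hS.const_mul _), integral_const_mul, integral_const_mul,
    integral_tsum_mul_comp hP (summable_phat hs) hf₁, (hasSum_phat hlam hK ha hs).tsum_eq,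
    one_mul]

theorem integral_dormantDensity_mul_Rop_false {P : Measure (EnvSpace d K)} [IsFiniteMeasure P]
    (hf : Measurable f) (hfC : ∀ x, |f x| ≤ C) :
    ∫ e, dormantDensity e * Rop a lam f (e, false) ∂P =
      qs a lam K * ∫ e, f (e, true) ∂P + ∫ e, dormantDensity e * f (e, false) ∂P
        - qs a lam K * ∫ e, f (e, false) ∂P := by
  have hf₁ := integrable_comp_prodMk_of_abs_le (P := P) hf hfC true
  have hf₀ := integrable_comp_prodMk_of_abs_le (P := P) hf hfC false
  have hmf₀ : Integrable (fun e => dormantDensity e * f (e, false)) P :=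
    (integrable_dormantDensity P).mul_bdd hf₀.1 (ae_of_all _ fun _ => hfC _)
  have hpt : ∀ e, dormantDensity e * Rop a lam f (e, false) =
      qs a lam K * f (e, true) + dormantDensity e * f (e, false) - qs a lam K * f (e, false) :=
    fun e => by
      rw [← omegaE_mul_dormantDensity (a := a) (lam := lam) e]
      simp only [Rop]
      ring
  have hsum : Integrable (fun e => qs a lam K * f (e, true) + dormantDensity e * f (e, false)) P :=
    (hf₁.const_mul _).add hmf₀
  simp_rw [hpt]
  rw [integral_sub hsum (hf₀.const_mul _),
    integral_add (hf₁.const_mul _) hmf₀, integral_const_mul, integral_const_mul]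

end EnvironmentProcess

theorem stationarity_of_environment_process_general
    (d K : ℕ) (hK : 2 ≤ K)
    (a : ZLat d → ZLat d → ℝ) (lam : ℝ) (hlam : 0 < lam)
    (ha_nonneg : ∀ i j, 0 ≤ a i j)
    (ha_sum : Summable (a 0))
    (Pbar : Measure (EnvSpace d K)) [IsProbabilityMeasure Pbar]
    (hPinv : ∀ (j : ZLat d) (A : Set (EnvSpace d K)), MeasurableSet A →
      Pbar (shiftT j ⁻¹' A) = Pbar A)
    (Q : Measure (EnvSpace d K × Bool)) [IsProbabilityMeasure Q]
    (hQ1 : ∀ A : Set (EnvSpace d K), MeasurableSet A →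
      Q (A ×ˢ ({true} : Set Bool)) =
        ENNReal.ofReal (1 / (1 + ∫ e', Msize e' 0 / Nsize e' 0 ∂Pbar)) * Pbar A)
    (hQ0 : ∀ A : Set (EnvSpace d K), MeasurableSet A →
      Q (A ×ˢ ({false} : Set Bool)) =
        ENNReal.ofReal ((1 / (1 + ∫ e', Msize e' 0 / Nsize e' 0 ∂Pbar)) *
          ∫ e' in A, Msize e' 0 / Nsize e' 0 ∂Pbar)) :
    ∀ f : EnvSpace d K × Bool → ℝ, Measurable f → (∃ C, ∀ x, |f x| ≤ C) →
      ∫ x, Rop a lam f x ∂Q = ∫ x, f x ∂Q := by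
  rintro f hf ⟨C, hfC⟩
  have hK₀ : 0 < K := by omega
  have ha : ∀ i, 0 ≤ a 0 i := ha_nonneg 0
  set c := 1 / (1 + ∫ e, dormantDensity e ∂Pbar)
  have hc : 0 ≤ c := by
    have : 0 ≤ ∫ e, dormantDensity e ∂Pbar := integral_nonneg dormantDensity_nonneg
    positivity
  have hQ : ∀ g : EnvSpace d K × Bool → ℝ, Measurable g → (∀ x, |g x| ≤ C) →
      ∫ x, g x ∂Q = c * (∫ e, g (e, true) ∂Pbar + ∫ e, dormantDensity e * g (e, false) ∂Pbar) :=
    fun g hg hgC => integral_prod_bool_of_density hc (integrable_dormantDensity Pbar)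
      dormantDensity_nonneg hQ1 hQ0 (.of_bound hg.aestronglyMeasurable C (ae_of_all _ hgC))
  rw [hQ _ (measurable_Rop ha_sum hf hfC) (abs_Rop_le hlam hK₀ ha ha_sum hfC), hQ f hf hfC,
    integral_Rop_true hlam hK₀ ha ha_sum (measurePreserving_shiftT hPinv) hf hfC,
    integral_dormantDensity_mul_Rop_false hf hfC]
  ring

/-- Stationarity of `Q` for the environment process.
For every bounded measurable `f : Ω_𝔎 → ℝ`, `∫ Rf dQ = ∫ f dQ`. -/
theorem stationarity_of_environment_process
    (d K : ℕ) (hd : 1 ≤ d) (hK : 2 ≤ K)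
    (a : ZLat d → ZLat d → ℝ) (lam : ℝ) (hlam : 0 < lam)
    (ha_nonneg : ∀ i j, 0 ≤ a i j)
    (ha_transl : ∀ i j, a i j = a 0 (j - i))
    (ha_irr : ∀ i : ZLat d, ∃ n : ℕ, 0 < convPow (a 0) n i)
    (ha_sum : Summable (a 0))
    (ha00 : 0 < a 0 0)
    (Pbar : Measure (EnvSpace d K)) [IsProbabilityMeasure Pbar]
    (hPinv : ∀ (j : ZLat d) (A : Set (EnvSpace d K)), MeasurableSet A →
      Pbar (shiftT j ⁻¹' A) = Pbar A)
    (hPerg : ∀ A : Set (EnvSpace d K), MeasurableSet A →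
      (∀ j : ZLat d, shiftT j ⁻¹' A = A) → Pbar A = 0 ∨ Pbar A = 1)
    (Q : Measure (EnvSpace d K × Bool)) [IsProbabilityMeasure Q]
    (hQ1 : ∀ A : Set (EnvSpace d K), MeasurableSet A →
      Q (A ×ˢ ({true} : Set Bool)) =
        ENNReal.ofReal (1 / (1 + ∫ e', Msize e' 0 / Nsize e' 0 ∂Pbar)) * Pbar A)
    (hQ0 : ∀ A : Set (EnvSpace d K), MeasurableSet A →
      Q (A ×ˢ ({false} : Set Bool)) =
        ENNReal.ofReal ((1 / (1 + ∫ e', Msize e' 0 / Nsize e' 0 ∂Pbar)) *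
          ∫ e' in A, Msize e' 0 / Nsize e' 0 ∂Pbar)) :
    ∀ f : EnvSpace d K × Bool → ℝ, Measurable f → (∃ C, ∀ x, |f x| ≤ C) →
      ∫ x, Rop a lam f x ∂Q = ∫ x, f x ∂Q :=
  stationarity_of_environment_process_general d K hK a lam hlam ha_nonneg ha_sum Pbar hPinv Q hQ1
    hQ0
end

section
/- Functions fixed by the square of the Markov operator are constant: under assumptions (i)–(iv) below, if ψ ∈ L^∞(Ω,Q) satisfies κ(κψ) = ψ Q-almost everywhere, then ψ = ∫_Ω ψ dQ holds Q-almost everywhere. -/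
/-!
Since `κ²ψ = ψ`, the function `ψ - κψ` satisfies `κ(ψ - κψ) = -(ψ - κψ)`, so it vanishes and `ψ`
is harmonic. For a harmonic `ψ`, stationarity kills the variance `∫∫ (ψ y - ψ w)² κ(w, dy) Q(dw)`,
so `ψ` is constant along `κ`-transitions. Hence every preimage `ψ⁻¹' s` of a Borel set is
invariant, thus of measure `0` or `1` by ergodicity, and since `ℝ` is countably separated this
forces `ψ` to be a.e. constant.
-/

open MeasureTheory Filter ProbabilityTheory

section

variable {Ω : Type*} [MeasurableSpace Ω]

lemma abs_integral_le_of_forall_abs_le {μ : Measure Ω} [IsProbabilityMeasure μ] {f : Ω → ℝ}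
    {C : ℝ} (hC : ∀ x, |f x| ≤ C) : |∫ x, f x ∂μ| ≤ C := by
  simpa using norm_integral_le_of_norm_le_const (μ := μ) (f := f) (Eventually.of_forall hC)

lemma integrable_of_forall_abs_le {μ : Measure Ω} [IsFiniteMeasure μ] {f : Ω → ℝ}
    (hf : Measurable f) {C : ℝ} (hC : ∀ x, |f x| ≤ C) : Integrable f μ :=
  .of_bound hf.aestronglyMeasurable C (Eventually.of_forall hC)

variable {Q : Measure Ω} {κ : Kernel Ω Ω} {f : Ω → ℝ} {C : ℝ}

lemma measurable_integral_kernel (hf : Measurable f) : Measurable fun w ↦ ∫ y, f y ∂κ w :=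
  hf.stronglyMeasurable.integral_kernel.measurable

lemma ae_integral_kernel_sub_eq_neg [IsMarkovKernel κ] (hf : Measurable f)
    (hC : ∀ x, |f x| ≤ C) (hfix : ∀ᵐ w ∂Q, ∫ y, ∫ z, f z ∂κ y ∂κ w = f w) :
    ∀ᵐ w ∂Q, ∫ y, (f y - ∫ z, f z ∂κ y) ∂κ w = -(f w - ∫ z, f z ∂κ w) := by
  filter_upwards [hfix] with w hw
  rw [integral_sub (integrable_of_forall_abs_le hf hC)
    (integrable_of_forall_abs_le (measurable_integral_kernel hf)
      fun y ↦ abs_integral_le_of_forall_abs_le hC), hw]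
  ring

lemma integral_compProd_sub_sq [IsFiniteMeasure Q] [IsMarkovKernel κ] (hf : Measurable f)
    (hC : ∀ x, |f x| ≤ C) :
    ∫ p, (f p.2 - f p.1) ^ 2 ∂(Q ⊗ₘ κ) =
      ∫ w, ∫ y, f y ^ 2 ∂κ w ∂Q - 2 * ∫ w, f w * ∫ y, f y ∂κ w ∂Q + ∫ w, f w ^ 2 ∂Q := by
  have hf₁ : MemLp (fun p : Ω × Ω ↦ f p.1) 2 (Q ⊗ₘ κ) :=
    .of_bound (hf.comp measurable_fst).aestronglyMeasurable C (.of_forall fun p ↦ hC p.1)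
  have hf₂ : MemLp (fun p : Ω × Ω ↦ f p.2) 2 (Q ⊗ₘ κ) :=
    .of_bound (hf.comp measurable_snd).aestronglyMeasurable C (.of_forall fun p ↦ hC p.2)
  have hint₁₂ : Integrable (fun p : Ω × Ω ↦ f p.1 * f p.2) (Q ⊗ₘ κ) := hf₁.integrable_mul hf₂
  have hint : Integrable (fun p : Ω × Ω ↦ f p.2 ^ 2 - 2 * (f p.1 * f p.2)) (Q ⊗ₘ κ) :=
    hf₂.integrable_sq.sub (hint₁₂.const_mul 2)
  have hexpand : (fun p : Ω × Ω ↦ (f p.2 - f p.1) ^ 2) =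
      fun p ↦ f p.2 ^ 2 - 2 * (f p.1 * f p.2) + f p.1 ^ 2 := by
    ext p
    ring
  rw [hexpand, integral_add hint hf₁.integrable_sq,
    integral_sub hf₂.integrable_sq (hint₁₂.const_mul 2), integral_const_mul,
    Measure.integral_compProd hf₂.integrable_sq, Measure.integral_compProd hint₁₂,
    Measure.integral_compProd hf₁.integrable_sq]
  simp_rw [integral_const_mul, integral_const, probReal_univ, one_smul]

/-- For harmonic `f`, the variance `∫ (f y - f w)² d(Q ⊗ κ)` reduces to
`∫ κ(f²) dQ - ∫ f² dQ`, which stationarity makes vanish. -/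
lemma ae_ae_eq_of_integral_kernel_eq [IsFiniteMeasure Q] [IsMarkovKernel κ]
    (hf : Measurable f) (hC : ∀ x, |f x| ≤ C)
    (hsq : ∫ w, ∫ y, f y ^ 2 ∂κ w ∂Q = ∫ w, f w ^ 2 ∂Q)
    (hharm : ∀ᵐ w ∂Q, ∫ y, f y ∂κ w = f w) :
    ∀ᵐ w ∂Q, ∀ᵐ y ∂κ w, f y = f w := by
  have hvar : ∫ p, (f p.2 - f p.1) ^ 2 ∂(Q ⊗ₘ κ) = 0 := by
    rw [integral_compProd_sub_sq hf hC, hsq,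
      integral_congr_ae (hharm.mono fun w hw ↦ show f w * _ = f w ^ 2 by rw [hw, sq])]
    ring
  have hint : Integrable (fun p : Ω × Ω ↦ (f p.2 - f p.1) ^ 2) (Q ⊗ₘ κ) := by
    refine MemLp.integrable_sq (.of_bound (by fun_prop) (C + C) (.of_forall fun p ↦ ?_))
    exact (abs_sub _ _).trans (add_le_add (hC p.2) (hC p.1))
  have hzero : ∀ᵐ p ∂(Q ⊗ₘ κ), f p.2 = f p.1 := by
    filter_upwards [(integral_eq_zero_iff_of_nonneg (fun p ↦ sq_nonneg _) hint).mp hvar]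
      with p hp
    exact sub_eq_zero.mp (pow_eq_zero_iff two_ne_zero |>.mp hp)
  exact (Measure.ae_compProd_iff (measurableSet_eq_fun (by fun_prop) (by fun_prop))).mp hzero

lemma ae_integral_indicator_preimage_eq [IsMarkovKernel κ] {β : Type*} {g : Ω → β}
    (hg : ∀ᵐ w ∂Q, ∀ᵐ y ∂κ w, g y = g w) (s : Set β) :
    ∀ᵐ w ∂Q, ∫ y, (g ⁻¹' s).indicator (fun _ ↦ (1 : ℝ)) y ∂κ w =
      (g ⁻¹' s).indicator (fun _ ↦ (1 : ℝ)) w := by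
  filter_upwards [hg] with w hw
  have hconst : (g ⁻¹' s).indicator (fun _ ↦ (1 : ℝ)) =ᵐ[κ w]
      fun _ ↦ (g ⁻¹' s).indicator (fun _ ↦ (1 : ℝ)) w := by
    filter_upwards [hw] with y hy using congrArg (s.indicator fun _ ↦ (1 : ℝ)) hy
  rw [integral_congr_ae hconst, integral_const, probReal_univ, one_smul]

lemma exists_ae_eq_const_of_measure_preimage_eq_zero_or_one [IsProbabilityMeasure Q]
    {β : Type*} [MeasurableSpace β] [Nonempty β] [MeasurableSpace.CountablySeparated β]
    {g : Ω → β} (hg : Measurable g)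
    (h01 : ∀ s, MeasurableSet s → Q (g ⁻¹' s) = 0 ∨ Q (g ⁻¹' s) = 1) :
    ∃ c, g =ᵐ[Q] Function.const Ω c := by
  refine exists_eventuallyEq_const_of_forall_separating MeasurableSet fun s hs ↦ ?_
  rcases h01 s hs with h | h
  · exact .inr (measure_eq_zero_iff_ae_notMem.mp h)
  · exact .inl (ae_iff_measure_eq (hg hs).nullMeasurableSet |>.mpr (h.trans measure_univ.symm))

end

theorem fixed_by_square_of_markov_operator_is_constant_general
    {Ω : Type*} [MeasurableSpace Ω]
    (Q : Measure Ω) [IsProbabilityMeasure Q]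
    (κ : ProbabilityTheory.Kernel Ω Ω) [ProbabilityTheory.IsMarkovKernel κ]
    (hstat : ∀ f : Ω → ℝ, Measurable f → (∃ C, ∀ x, |f x| ≤ C) →
      ∫ w, (∫ y, f y ∂(κ w)) ∂Q = ∫ w, f w ∂Q)
    (herg : ∀ A : Set Ω, MeasurableSet A →
      (∀ᵐ w ∂Q, (∫ y, A.indicator (fun _ => (1:ℝ)) y ∂(κ w)) =
        A.indicator (fun _ => (1:ℝ)) w) →
      Q A = 0 ∨ Q A = 1)
    (hspec : ∀ g : Ω → ℝ, Measurable g → (∃ C, ∀ x, |g x| ≤ C) →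
      (∀ᵐ w ∂Q, (∫ y, g y ∂(κ w)) = - g w) → (∀ᵐ w ∂Q, g w = 0))
    (ψ : Ω → ℝ) (hψ : Measurable ψ) (hψb : ∃ C, ∀ x, |ψ x| ≤ C)
    (hfix : ∀ᵐ w ∂Q, (∫ y, (∫ z, ψ z ∂(κ y)) ∂(κ w)) = ψ w) :
    ∀ᵐ w ∂Q, ψ w = ∫ x, ψ x ∂Q := by
  obtain ⟨C, hC⟩ := hψb
  have hharm : ∀ᵐ w ∂Q, ∫ y, ψ y ∂κ w = ψ w := by
    have hbound : ∀ x, |ψ x - ∫ y, ψ y ∂κ x| ≤ C + C := fun x ↦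
      (abs_sub _ _).trans (add_le_add (hC x) (abs_integral_le_of_forall_abs_le hC))
    filter_upwards [hspec _ (hψ.sub (measurable_integral_kernel hψ)) ⟨_, hbound⟩
      (ae_integral_kernel_sub_eq_neg hψ hC hfix)] with w hw
    exact (sub_eq_zero.mp hw).symm
  have hsq : ∫ w, ∫ y, ψ y ^ 2 ∂κ w ∂Q = ∫ w, ψ w ^ 2 ∂Q :=
    hstat _ (hψ.pow_const 2) ⟨C ^ 2, fun x ↦ by
      simpa only [abs_pow] using pow_le_pow_left₀ (abs_nonneg _) (hC x) 2⟩
  have hconst := ae_ae_eq_of_integral_kernel_eq hψ hC hsq hharm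
  obtain ⟨c, hc⟩ := exists_ae_eq_const_of_measure_preimage_eq_zero_or_one hψ fun s hs ↦
    herg _ (hψ hs) (ae_integral_indicator_preimage_eq hconst s)
  filter_upwards [hc] with w hw
  rw [hw, integral_congr_ae hc]
  simp

/-- Functions fixed by the square of the Markov operator are constant. -/
theorem fixed_by_square_of_markov_operator_is_constant
    {Ω : Type*} [MeasurableSpace Ω] [MeasurableSpace.CountablyGenerated Ω]
    (Q : Measure Ω) [IsProbabilityMeasure Q]
    (κ : ProbabilityTheory.Kernel Ω Ω) [ProbabilityTheory.IsMarkovKernel κ]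
    (hstat : ∀ f : Ω → ℝ, Measurable f → (∃ C, ∀ x, |f x| ≤ C) →
      ∫ w, (∫ y, f y ∂(κ w)) ∂Q = ∫ w, f w ∂Q)
    (hrev : ∀ f g : Ω → ℝ, Measurable f → (∃ C, ∀ x, |f x| ≤ C) →
      Measurable g → (∃ C, ∀ x, |g x| ≤ C) →
      ∫ w, g w * (∫ y, f y ∂(κ w)) ∂Q = ∫ w, f w * (∫ y, g y ∂(κ w)) ∂Q)
    (herg : ∀ A : Set Ω, MeasurableSet A →
      (∀ᵐ w ∂Q, (∫ y, A.indicator (fun _ => (1:ℝ)) y ∂(κ w)) =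
        A.indicator (fun _ => (1:ℝ)) w) →
      Q A = 0 ∨ Q A = 1)
    (hspec : ∀ g : Ω → ℝ, Measurable g → (∃ C, ∀ x, |g x| ≤ C) →
      (∀ᵐ w ∂Q, (∫ y, g y ∂(κ w)) = - g w) → (∀ᵐ w ∂Q, g w = 0))
    (ψ : Ω → ℝ) (hψ : Measurable ψ) (hψb : ∃ C, ∀ x, |ψ x| ≤ C)
    (hfix : ∀ᵐ w ∂Q, (∫ y, (∫ z, ψ z ∂(κ y)) ∂(κ w)) = ψ w) :
    ∀ᵐ w ∂Q, ψ w = ∫ x, ψ x ∂Q :=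
  fixed_by_square_of_markov_operator_is_constant_general Q κ hstat herg hspec ψ hψ hψb hfix
end

section
/- Constant harmonic functions for the single-particle dual: let a be a migration kernel, λ ∈ (0,∞), and K = (K_i)_{i∈ℤ^d} a family of positive reals. If f : ℤ^d × {0,1} → ℝ is bounded and satisfies, for every (i,α) ∈ ℤ^d × {0,1}, (α·λ + (1−α)·λ·K_i)·(f(i,1−α) − f(i,α)) + α·Σ_{j∈ℤ^d} a(i,j)·(f(j,α) − f(i,α)) = 0 (i.e. f is annihilated by the generator of the single-particle dual process), then f is constant. -/
open MeasureTheory Filter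

/-!
On the dormant layer the equation reads `λ K_i (f(i,1) − f(i,0)) = 0`, so both layers carry the
same function `g`, and on the active layer it says that `g` is a bounded harmonic function of
the random walk with jump weights `a(0,·)`. That `g` is constant is the Choquet–Deny theorem:
for a jump `t` the increment `u = g(· + t) − g` is again bounded harmonic, and harmonicity
spreads near-maximality of `u` along the jumps of the walk, so if `sup u > 0` then `g` would
grow linearly along `i, i + t, i + 2t, …`, contradicting boundedness. Irreducibility makes every
`t` a sum of jumps.
-/

open Function

lemma summable_mul_of_abs_le {ι : Type*} {p h : ι → ℝ} (hp : Summable p) (hp0 : ∀ i, 0 ≤ p i)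
    {C : ℝ} (hh : ∀ i, |h i| ≤ C) : Summable fun i => p i * h i :=
  (hp.mul_right C).of_norm_bounded fun i => by
    rw [Real.norm_eq_abs, abs_mul, abs_of_nonneg (hp0 i)]
    exact mul_le_mul_of_nonneg_left (hh i) (hp0 i)

lemma abs_sub_le_two_mul_of_abs_le {α : Type*} {g : α → ℝ} {C : ℝ} (hC : ∀ i, |g i| ≤ C)
    (x y : α) : |g x - g y| ≤ 2 * C :=
  (abs_sub _ _).trans (by linarith [hC x, hC y])

lemma exists_near_sup_and_increment_ge {G : Type*} [AddCommGroup G] {g : G → ℝ} {t : G}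
    {s c : ℝ} (hs : ∀ ε > 0, ∃ i, s - (g (i + t) - g i) < ε) (hc : 0 < c)
    (hcontrol : ∀ i, c * (s - (g (i + t + t) - g (i + t))) ≤ s - (g (i + t) - g i)) (m : ℕ) :
    ∀ ε > 0, ∃ i, s - (g (i + t) - g i) < ε ∧ m * (s - ε) ≤ g i - g (i - m • t) := by
  induction m with
  | zero => exact fun ε hε => (hs ε hε).imp fun i hi => ⟨hi, by simp⟩
  | succ m ih =>
    intro ε hε
    obtain ⟨i, hi, hgrowth⟩ := ih (min ε (c * ε)) (lt_min hε (mul_pos hc hε))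
    have hε' := min_le_left ε (c * ε)
    refine ⟨i + t, ?_, ?_⟩
    · exact lt_of_mul_lt_mul_left (by linarith [hcontrol i, min_le_right ε (c * ε)]) hc.le
    · have hm : (m : ℝ) * (s - ε) ≤ m * (s - min ε (c * ε)) :=
        mul_le_mul_of_nonneg_left (by linarith) m.cast_nonneg
      have hshift : i + t - (m + 1) • t = i - m • t := by
        rw [succ_nsmul]
        abel
      rw [hshift]
      push_cast
      linarith

/-- `g` is annihilated by the generator of the random walk on `G` jumping by `j` at rate `p j`. -/
def IsHarmonic {G : Type*} [AddCommGroup G] (p : G → ℝ) (g : G → ℝ) : Prop :=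
  ∀ i, ∑' j, p j * (g (i + j) - g i) = 0

namespace IsHarmonic

variable {G : Type*} [AddCommGroup G] {p g : G → ℝ} {C : ℝ}

lemma neg (hg : IsHarmonic p g) : IsHarmonic p (-g) := fun i => by
  simp only [Pi.neg_apply, neg_sub_neg]
  simp only [← neg_sub (g (i + _)), mul_neg, tsum_neg, hg i, neg_zero]

lemma sub_shift (hp : Summable p) (hp0 : ∀ j, 0 ≤ p j) (hC : ∀ i, |g i| ≤ C)
    (hg : IsHarmonic p g) (t : G) : IsHarmonic p fun i => g (i + t) - g i := fun i => by
  have hsplit : (fun j => p j * (g (i + j + t) - g (i + j) - (g (i + t) - g i))) =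
      fun j => p j * (g (i + t + j) - g (i + t)) - p j * (g (i + j) - g i) := by
    funext j
    rw [add_right_comm]
    ring
  rw [hsplit, (summable_mul_of_abs_le hp hp0 fun j => abs_sub_le_two_mul_of_abs_le hC _ _).tsum_sub
    (summable_mul_of_abs_le hp hp0 fun j => abs_sub_le_two_mul_of_abs_le hC _ _), hg, hg,
    sub_zero]

lemma mul_defect_le (hp : Summable p) (hp0 : ∀ j, 0 ≤ p j) (hC : ∀ i, |g i| ≤ C)
    (hg : IsHarmonic p g) {s : ℝ} (hs : ∀ i, g i ≤ s) (k i : G) :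
    p k * (s - g (i + k)) ≤ (∑' j, p j) * (s - g i) := by
  have hinc : ∀ j, |g (i + j) - g i| ≤ 2 * C := fun j => abs_sub_le_two_mul_of_abs_le hC _ _
  have hsplit : (fun j => p j * (s - g (i + j))) =
      fun j => p j * (s - g i) - p j * (g (i + j) - g i) := by
    funext j
    ring
  have hsummable : Summable fun j => p j * (s - g (i + j)) := by
    rw [hsplit]
    exact (hp.mul_right _).sub (summable_mul_of_abs_le hp hp0 hinc)
  calc p k * (s - g (i + k))
      ≤ ∑' j, p j * (s - g (i + j)) :=
        hsummable.le_tsum k fun j _ => mul_nonneg (hp0 j) (sub_nonneg.2 (hs (i + j)))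
    _ = (∑' j, p j) * (s - g i) := by
        rw [hsplit, (hp.mul_right _).tsum_sub (summable_mul_of_abs_le hp hp0 hinc),
          tsum_mul_right, hg i, sub_zero]

lemma exists_mul_defect_le_of_mem_closure (hp : Summable p) (hp0 : ∀ j, 0 ≤ p j)
    (hC : ∀ i, |g i| ≤ C) (hg : IsHarmonic p g) {s : ℝ} (hs : ∀ i, g i ≤ s) {t : G}
    (ht : t ∈ AddSubmonoid.closure (support p)) :
    ∃ c > 0, ∀ i, c * (s - g (i + t)) ≤ s - g i := by
  induction ht using AddSubmonoid.closure_induction with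
  | mem k hk =>
    have hk : 0 < p k := (hp0 k).lt_of_ne' hk
    have hA : 0 < ∑' j, p j := hk.trans_le (hp.le_tsum k fun j _ => hp0 j)
    refine ⟨p k / ∑' j, p j, div_pos hk hA, fun i => ?_⟩
    rw [div_mul_eq_mul_div, div_le_iff₀ hA, mul_comm (s - g i)]
    exact hg.mul_defect_le hp hp0 hC hs k i
  | zero => exact ⟨1, one_pos, fun i => by rw [add_zero, one_mul]⟩
  | add t₁ t₂ _ _ h₁ h₂ =>
    obtain ⟨c₁, hc₁, h₁⟩ := h₁
    obtain ⟨c₂, hc₂, h₂⟩ := h₂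
    refine ⟨c₂ * c₁, mul_pos hc₂ hc₁, fun i => ?_⟩
    calc c₂ * c₁ * (s - g (i + (t₁ + t₂))) = c₁ * (c₂ * (s - g (i + t₁ + t₂))) := by
          rw [add_assoc]; ring
      _ ≤ c₁ * (s - g (i + t₁)) := mul_le_mul_of_nonneg_left (h₂ _) hc₁.le
      _ ≤ s - g i := h₁ i

lemma add_le_of_mem_closure (hp : Summable p) (hp0 : ∀ j, 0 ≤ p j) (hC : ∀ i, |g i| ≤ C)
    (hg : IsHarmonic p g) {t : G} (ht : t ∈ AddSubmonoid.closure (support p)) (i : G) :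
    g (i + t) ≤ g i := by
  have hinc : ∀ i, |g (i + t) - g i| ≤ 2 * C := fun i => abs_sub_le_two_mul_of_abs_le hC _ _
  have hbdd : BddAbove (Set.range fun i => g (i + t) - g i) :=
    ⟨2 * C, by rintro _ ⟨i, rfl⟩; exact le_of_abs_le (hinc i)⟩
  set s := ⨆ i, g (i + t) - g i
  have hle : ∀ i, g (i + t) - g i ≤ s := le_ciSup hbdd
  have hnear : ∀ ε > 0, ∃ i, s - (g (i + t) - g i) < ε := fun ε hε =>
    (exists_lt_of_lt_ciSup (sub_lt_self s hε)).imp fun i hi => by linarith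
  obtain ⟨c, hc, hcontrol⟩ :=
    (hg.sub_shift hp hp0 hC t).exists_mul_defect_le_of_mem_closure hp hp0 hinc hle ht
  suffices s ≤ 0 by linarith [hle i]
  by_contra! hpos
  obtain ⟨m, hm⟩ := exists_nat_gt (4 * C / s)
  obtain ⟨j, -, hgrowth⟩ :=
    exists_near_sup_and_increment_ge hnear hc hcontrol m (s / 2) (half_pos hpos)
  rw [div_lt_iff₀ hpos] at hm
  linarith [le_of_abs_le (abs_sub_le_two_mul_of_abs_le hC j (j - m • t))]

lemma add_eq_of_mem_closure (hp : Summable p) (hp0 : ∀ j, 0 ≤ p j) (hC : ∀ i, |g i| ≤ C)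
    (hg : IsHarmonic p g) {t : G} (ht : t ∈ AddSubmonoid.closure (support p)) (i : G) :
    g (i + t) = g i :=
  le_antisymm (hg.add_le_of_mem_closure hp hp0 hC ht i) <| neg_le_neg_iff.1 <|
    hg.neg.add_le_of_mem_closure hp hp0 (fun i => (abs_neg (g i)).trans_le (hC i)) ht i

end IsHarmonic

lemma mem_closure_support_of_convPow_ne_zero {d : ℕ} {p : ZLat d → ℝ} :
    ∀ {n : ℕ} {t : ZLat d}, convPow p n t ≠ 0 → t ∈ AddSubmonoid.closure (support p)
  | 0, t, h => by
    obtain rfl : t = 0 := by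
      by_contra ht
      simp [convPow, ht] at h
    exact zero_mem _
  | n + 1, t, h => by
    obtain ⟨j, hj⟩ : ∃ j, convPow p n j * p (t - j) ≠ 0 := by
      by_contra! hzero
      exact h (by simp only [convPow, hzero, tsum_zero])
    rw [mul_ne_zero_iff] at hj
    simpa using add_mem (mem_closure_support_of_convPow_ne_zero hj.1)
      (AddSubmonoid.subset_closure hj.2)

theorem constant_harmonics_single_particle_dual_general
    (d : ℕ)
    (a : ZLat d → ZLat d → ℝ) (lam : ℝ) (hlam : 0 < lam)
    (ha_nonneg : ∀ i j, 0 ≤ a i j)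
    (ha_transl : ∀ i j, a i j = a 0 (j - i))
    (ha_irr : ∀ i : ZLat d, ∃ n : ℕ, 0 < convPow (a 0) n i)
    (ha_sum : Summable (a 0))
    (Kfam : ZLat d → ℝ) (hKfam : ∀ i, 0 < Kfam i)
    (f : ZLat d × Bool → ℝ) (hfb : ∃ C, ∀ x, |f x| ≤ C)
    (hharm : ∀ (i : ZLat d) (α : Bool),
      ((if α then lam else lam * Kfam i) * (f (i, !α) - f (i, α)) +
        (if α then (1:ℝ) else 0) * ∑' j : ZLat d, a i j * (f (j, α) - f (i, α))) = 0) :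
    ∀ x y : ZLat d × Bool, f x = f y := by
  obtain ⟨C, hC⟩ := hfb
  have hlayers : ∀ i, f (i, false) = f (i, true) := fun i => by
    have h := hharm i false
    simp only [Bool.false_eq_true, if_false, Bool.not_false, zero_mul, add_zero] at h
    linarith [(mul_eq_zero.1 h).resolve_left (mul_pos hlam (hKfam i)).ne']
  have hactive : IsHarmonic (a 0) fun i => f (i, true) := fun i => by
    have h := hharm i true
    simp only [if_true, Bool.not_true, hlayers, sub_self, mul_zero, one_mul, zero_add] at h
    rw [← h, ← (Equiv.addLeft i).tsum_eq fun j => a i j * (f (j, true) - f (i, true))]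
    simp only [Equiv.coe_addLeft, ha_transl i, add_sub_cancel_left]
  have hconst : ∀ i, f (i, true) = f (0, true) := fun i => by
    obtain ⟨n, hn⟩ := ha_irr i
    simpa using hactive.add_eq_of_mem_closure ha_sum (ha_nonneg 0) (fun _ => hC _)
      (mem_closure_support_of_convPow_ne_zero hn.ne') 0
  rintro ⟨i, α⟩ ⟨j, β⟩
  cases α <;> cases β <;> simp only [hlayers, hconst]

/-- Bounded harmonic functions of the single-particle dual are constant. -/
theorem constant_harmonics_single_particle_dual
    (d K : ℕ) (hd : 1 ≤ d) (hK : 2 ≤ K)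
    (a : ZLat d → ZLat d → ℝ) (lam : ℝ) (hlam : 0 < lam)
    (ha_nonneg : ∀ i j, 0 ≤ a i j)
    (ha_transl : ∀ i j, a i j = a 0 (j - i))
    (ha_irr : ∀ i : ZLat d, ∃ n : ℕ, 0 < convPow (a 0) n i)
    (ha_sum : Summable (a 0))
    (ha00 : 0 < a 0 0)
    (Kfam : ZLat d → ℝ) (hKfam : ∀ i, 0 < Kfam i)
    (f : ZLat d × Bool → ℝ) (hfb : ∃ C, ∀ x, |f x| ≤ C)
    (hharm : ∀ (i : ZLat d) (α : Bool),
      ((if α then lam else lam * Kfam i) * (f (i, !α) - f (i, α)) +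
        (if α then (1:ℝ) else 0) * ∑' j : ZLat d, a i j * (f (j, α) - f (i, α))) = 0) :
    ∀ x y : ZLat d × Bool, f x = f y :=
  constant_harmonics_single_particle_dual_general d a lam hlam ha_nonneg ha_transl ha_irr ha_sum
    Kfam hKfam f hfb hharm
end

section
/- Bounded nonnegative subharmonic functions of an irreducible recurrent random walk on ℤ^d are constant: let p be a probability distribution on ℤ^d that is irreducible (for every i ∈ ℤ^d there exists n ∈ ℕ with p^{⋆n}(i) > 0) and recurrent (Σ_{n≥0} p^{⋆n}(0) = ∞). If f : ℤ^d → ℝ is bounded, nonnegative, and satisfies Σ_{j∈ℤ^d} p(j)·f(i+j) ≥ f(i) for every i ∈ ℤ^d, then f is constant. -/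
open MeasureTheory Filter

/-!
Write `Pf(i) = Σ_j p(j) f(i + j)`. Subharmonicity is upgraded to harmonicity by recurrence: if
`f ≤ Pf` with a gap `δ > 0` at `i₀`, then the averages `Pⁿf(0)` grow by at least
`δ · Σ_{k<n} p^{⋆k}(i₀)`, which is unbounded because an irreducible recurrent walk visits every
site infinitely often in expectation. Applied to `f²`, which is subharmonic by Jensen's inequality
because `0 ≤ f ≤ Pf`, this makes `f²` harmonic; then
`Σ_j p(j) (f(x+j) - f(x))² = 2 f(x) (f(x) - Pf(x)) ≤ 0`, so `f` is invariant under every step of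
the walk, hence under every reachable translation, hence constant.
-/

open scoped ENNReal

section Walk

variable {G : Type*} [AddCommGroup G]

noncomputable def walkOp (q : G → ℝ≥0∞) (F : G → ℝ≥0∞) (i : G) : ℝ≥0∞ := ∑' j, q j * F (i + j)

variable {q : G → ℝ≥0∞}

lemma walkOp_mono {F F' : G → ℝ≥0∞} (h : F ≤ F') : walkOp q F ≤ walkOp q F' :=
  fun i => ENNReal.tsum_le_tsum fun j => by gcongr; exact h _

lemma walkOp_le (hq : ∑' j, q j ≤ 1) {F : G → ℝ≥0∞} {C : ℝ≥0∞} (hF : ∀ i, F i ≤ C) (i : G) :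
    walkOp q F i ≤ C :=
  calc walkOp q F i ≤ ∑' j, q j * C := ENNReal.tsum_le_tsum fun j => by gcongr; exact hF _
    _ = (∑' j, q j) * C := ENNReal.tsum_mul_right
    _ ≤ C := mul_le_of_le_one_left bot_le hq

variable [DecidableEq G]

lemma walkOp_add_single_zero (F : G → ℝ≥0∞) (i : G) (δ : ℝ≥0∞) :
    walkOp q (F + Pi.single i δ) 0 = walkOp q F 0 + q i * δ := by
  simp only [walkOp, Pi.add_apply, mul_add, zero_add]
  rw [ENNReal.tsum_add]
  congr 1
  rw [tsum_eq_single i fun j hj => by simp [hj]]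
  simp

/-- `convPow` with values in `ℝ≥0∞`, where sums can be reordered without summability conditions. -/
noncomputable def ennConvPow (q : G → ℝ≥0∞) : ℕ → G → ℝ≥0∞
  | 0 => fun i => if i = 0 then 1 else 0
  | n + 1 => fun i => ∑' j, ennConvPow q n j * q (i - j)

lemma walkOp_ennConvPow_zero (F : G → ℝ≥0∞) : walkOp (ennConvPow q 0) F = F := by
  funext i
  rw [walkOp, tsum_eq_single 0 fun j hj => by simp [ennConvPow, hj]]
  simp [ennConvPow]

lemma walkOp_ennConvPow_succ (n : ℕ) (F : G → ℝ≥0∞) :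
    walkOp (ennConvPow q (n + 1)) F = walkOp (ennConvPow q n) (walkOp q F) := by
  funext i
  have hshift : ∀ l, ∑' j, q (j - l) * F (i + j) = walkOp q F (i + l) := fun l => by
    rw [walkOp, ← (Equiv.addRight l).tsum_eq]
    refine tsum_congr fun j => ?_
    simp only [Equiv.coe_addRight, add_sub_cancel_right]
    rw [add_comm j l, add_assoc]
  calc ∑' j, (∑' l, ennConvPow q n l * q (j - l)) * F (i + j)
      = ∑' l, ∑' j, ennConvPow q n l * (q (j - l) * F (i + j)) := by
        simp only [← ENNReal.tsum_mul_right, mul_assoc]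
        exact ENNReal.tsum_comm
    _ = walkOp (ennConvPow q n) (walkOp q F) i := by
        simp only [ENNReal.tsum_mul_left, hshift, walkOp]

lemma walkOp_ennConvPow_le (hq : ∑' j, q j ≤ 1) {F : G → ℝ≥0∞} {C : ℝ≥0∞} (hF : ∀ i, F i ≤ C)
    (n : ℕ) (i : G) : walkOp (ennConvPow q n) F i ≤ C := by
  induction n generalizing F with
  | zero => rw [walkOp_ennConvPow_zero]; exact hF i
  | succ n ih => rw [walkOp_ennConvPow_succ]; exact ih (walkOp_le hq hF)

lemma ennConvPow_le_one (hq : ∑' j, q j ≤ 1) (n : ℕ) (i : G) : ennConvPow q n i ≤ 1 :=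
  calc ennConvPow q n i ≤ ∑' j, ennConvPow q n j := ENNReal.le_tsum i
    _ = walkOp (ennConvPow q n) 1 0 := by simp [walkOp]
    _ ≤ 1 := walkOp_ennConvPow_le hq (fun _ => le_rfl) n 0

lemma mul_ennConvPow_le_ennConvPow_add (k m : ℕ) (i : G) :
    ennConvPow q k 0 * ennConvPow q m i ≤ ennConvPow q (k + m) i := by
  induction m generalizing i with
  | zero => by_cases hi : i = 0 <;> simp [ennConvPow, hi]
  | succ m ih =>
    calc ennConvPow q k 0 * ∑' j, ennConvPow q m j * q (i - j)
        = ∑' j, ennConvPow q k 0 * ennConvPow q m j * q (i - j) := by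
          simp only [← ENNReal.tsum_mul_left, mul_assoc]
      _ ≤ ∑' j, ennConvPow q (k + m) j * q (i - j) :=
          ENNReal.tsum_le_tsum fun j => by gcongr; exact ih j

lemma tsum_ennConvPow_eq_top (h0 : ∑' n, ennConvPow q n 0 = ⊤) {m : ℕ} {i : G}
    (hm : ennConvPow q m i ≠ 0) : ∑' n, ennConvPow q n i = ⊤ := by
  refine top_le_iff.1 ?_
  calc ⊤ = (∑' k, ennConvPow q k 0) * ennConvPow q m i := by rw [h0, ENNReal.top_mul hm]
    _ = ∑' k, ennConvPow q k 0 * ennConvPow q m i := ENNReal.tsum_mul_right.symm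
    _ ≤ ∑' k, ennConvPow q (k + m) i :=
        ENNReal.tsum_le_tsum fun k => mul_ennConvPow_le_ennConvPow_add k m i
    _ ≤ ∑' n, ennConvPow q n i :=
        ENNReal.tsum_comp_le_tsum_of_injective (add_left_injective m) _

theorem walkOp_eq_of_le_walkOp (hq : ∑' j, q j ≤ 1) (hrec : ∀ i, ∑' n, ennConvPow q n i = ⊤)
    {F : G → ℝ≥0∞} {C : ℝ≥0∞} (hC : C ≠ ⊤) (hFC : ∀ i, F i ≤ C) (hsub : F ≤ walkOp q F) :
    walkOp q F = F := by
  funext i₀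
  refine le_antisymm ?_ (hsub i₀)
  by_contra! hlt
  set δ := walkOp q F i₀ - F i₀
  have hδ : δ ≠ 0 := (tsub_pos_of_lt hlt).ne'
  have hjump : F + Pi.single i₀ δ ≤ walkOp q F := fun i => by
    by_cases hi : i = i₀
    · subst hi; simpa [δ] using (add_tsub_cancel_of_le hlt.le).le
    · simpa [hi] using hsub i
  have hgain : ∀ n,
      (∑ k ∈ Finset.range n, ennConvPow q k i₀) * δ ≤ walkOp (ennConvPow q n) F 0 := by
    intro n
    induction n with
    | zero => simp
    | succ n ih =>
      calc (∑ k ∈ Finset.range (n + 1), ennConvPow q k i₀) * δ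
          ≤ walkOp (ennConvPow q n) F 0 + ennConvPow q n i₀ * δ := by
            rw [Finset.sum_range_succ, add_mul]; gcongr
        _ = walkOp (ennConvPow q n) (F + Pi.single i₀ δ) 0 := (walkOp_add_single_zero F i₀ δ).symm
        _ ≤ walkOp (ennConvPow q (n + 1)) F 0 := by
            rw [walkOp_ennConvPow_succ]; exact walkOp_mono hjump 0
  have hbound : (∑' k, ennConvPow q k i₀) * δ ≤ C := by
    rw [ENNReal.tsum_eq_iSup_nat, ENNReal.iSup_mul]
    exact iSup_le fun n => (hgain n).trans (walkOp_ennConvPow_le hq hFC n 0)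
  rw [hrec, ENNReal.top_mul hδ, top_le_iff] at hbound
  exact hC hbound

end Walk

section Averages

variable {α : Type*} {p y : α → ℝ} {C : ℝ}

lemma summable_mul_of_abs_le_s17 (hp : Summable p) (hy : ∀ j, |y j| ≤ C) :
    Summable fun j => p j * y j :=
  (hp.abs.mul_right C).of_norm_bounded fun j => by
    rw [Real.norm_eq_abs, abs_mul]
    exact mul_le_mul_of_nonneg_left (hy j) (abs_nonneg _)

lemma hasSum_mul_sub_sq (hp : HasSum p 1) (hy : ∀ j, |y j| ≤ C) (c : ℝ) :
    HasSum (fun j => p j * (y j - c) ^ 2)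
      (∑' j, p j * y j ^ 2 - 2 * c * ∑' j, p j * y j + c ^ 2) := by
  have hy2 : ∀ j, |y j ^ 2| ≤ C ^ 2 := fun j => by
    rw [abs_pow]; exact pow_le_pow_left₀ (abs_nonneg _) (hy j) 2
  have := ((summable_mul_of_abs_le_s17 hp.summable hy2).hasSum.sub
    ((summable_mul_of_abs_le_s17 hp.summable hy).hasSum.mul_left (2 * c))).add (hp.mul_left (c ^ 2))
  rw [mul_one] at this
  exact this.congr_fun fun j => by ring

lemma sq_tsum_mul_le (hp0 : ∀ j, 0 ≤ p j) (hp : HasSum p 1) (hy : ∀ j, |y j| ≤ C) :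
    (∑' j, p j * y j) ^ 2 ≤ ∑' j, p j * y j ^ 2 := by
  have := (hasSum_mul_sub_sq hp hy (∑' j, p j * y j)).nonneg fun j => by
    have := hp0 j; positivity
  nlinarith

lemma tsum_ofReal_eq_one_of_hasSum (hp0 : ∀ j, 0 ≤ p j) (hp : HasSum p 1) :
    ∑' j, ENNReal.ofReal (p j) = 1 := by
  rw [← ENNReal.ofReal_tsum_of_nonneg hp0 hp.summable, hp.tsum_eq, ENNReal.ofReal_one]

end Averages

section Steps

variable {G : Type*} [AddCommGroup G] {p f : G → ℝ} {C : ℝ}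

lemma sq_le_tsum_mul_sq (hp0 : ∀ j, 0 ≤ p j) (hp : HasSum p 1) (hfC : ∀ i, |f i| ≤ C)
    (hf0 : ∀ i, 0 ≤ f i) (hsub : ∀ i, f i ≤ ∑' j, p j * f (i + j)) (i : G) :
    f i ^ 2 ≤ ∑' j, p j * f (i + j) ^ 2 :=
  (pow_le_pow_left₀ (hf0 i) (hsub i) 2).trans (sq_tsum_mul_le hp0 hp fun j => hfC (i + j))

lemma apply_add_eq_of_sq_harmonic (hp0 : ∀ j, 0 ≤ p j) (hp : HasSum p 1) (hfC : ∀ i, |f i| ≤ C)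
    (hf0 : ∀ i, 0 ≤ f i) (hsub : ∀ i, f i ≤ ∑' j, p j * f (i + j))
    (hsq : ∀ i, ∑' j, p j * f (i + j) ^ 2 = f i ^ 2) (x : G) {j : G} (hj : p j ≠ 0) :
    f (x + j) = f x := by
  have hvar := hasSum_mul_sub_sq hp (fun k => hfC (x + k)) (f x)
  rw [hsq] at hvar
  have hterm : p j * (f (x + j) - f x) ^ 2 ≤ 0 :=
    (le_hasSum hvar j fun k _ => mul_nonneg (hp0 k) (sq_nonneg _)).trans
      (by nlinarith [mul_nonneg (hf0 x) (sub_nonneg.2 (hsub x))])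
  have hsq0 : (f (x + j) - f x) ^ 2 ≤ 0 := nonpos_of_mul_nonpos_right hterm ((hp0 j).lt_of_ne' hj)
  exact sub_eq_zero.1 (pow_eq_zero_iff two_ne_zero |>.1 (le_antisymm hsq0 (sq_nonneg _)))

end Steps

section Lattice

variable {d : ℕ} {p : ZLat d → ℝ}

lemma convPow_nonneg (hp0 : ∀ j, 0 ≤ p j) (n : ℕ) (i : ZLat d) : 0 ≤ convPow p n i := by
  induction n generalizing i with
  | zero => simp only [convPow]; split_ifs <;> norm_num
  | succ n ih => exact tsum_nonneg fun j => mul_nonneg (ih j) (hp0 _)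

lemma ofReal_convPow (hp0 : ∀ j, 0 ≤ p j) (hp : HasSum p 1) (n : ℕ) (i : ZLat d) :
    ENNReal.ofReal (convPow p n i) = ennConvPow (fun j => ENNReal.ofReal (p j)) n i := by
  induction n generalizing i with
  | zero => simp only [convPow, ennConvPow]; split_ifs <;> simp
  | succ n ih =>
    have hterm : ∀ j, ENNReal.ofReal (convPow p n j * p (i - j))
        = ennConvPow (fun j => ENNReal.ofReal (p j)) n j * ENNReal.ofReal (p (i - j)) :=
      fun j => by rw [ENNReal.ofReal_mul (convPow_nonneg hp0 n j), ih]
    have hnonneg : ∀ j, 0 ≤ convPow p n j * p (i - j) :=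
      fun j => mul_nonneg (convPow_nonneg hp0 n j) (hp0 _)
    have hfin : ∑' j, ENNReal.ofReal (convPow p n j * p (i - j)) ≠ ⊤ := by
      simp only [hterm]
      exact ((ennConvPow_le_one (tsum_ofReal_eq_one_of_hasSum hp0 hp).le (n + 1) i).trans_lt
        ENNReal.one_lt_top).ne
    have hsum : Summable fun j => convPow p n j * p (i - j) :=
      (ENNReal.summable_toReal hfin).congr fun j => ENNReal.toReal_ofReal (hnonneg j)
    show ENNReal.ofReal (∑' j, convPow p n j * p (i - j)) = _
    rw [ENNReal.ofReal_tsum_of_nonneg hnonneg hsum]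
    simp only [hterm]
    rfl

theorem tsum_mul_apply_add_eq_of_le (hp0 : ∀ j, 0 ≤ p j) (hp : HasSum p 1)
    (hirr : ∀ i : ZLat d, ∃ n : ℕ, 0 < convPow p n i)
    (hrec : ∑' n : ℕ, ENNReal.ofReal (convPow p n 0) = ⊤)
    {g : ZLat d → ℝ} {C : ℝ} (hgC : ∀ i, |g i| ≤ C) (hg0 : ∀ i, 0 ≤ g i)
    (hsub : ∀ i, g i ≤ ∑' j, p j * g (i + j)) (i : ZLat d) :
    ∑' j, p j * g (i + j) = g i := by
  set q : ZLat d → ℝ≥0∞ := fun j => ENNReal.ofReal (p j)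
  have hwalk : ∀ i, walkOp q (fun i => ENNReal.ofReal (g i)) i
      = ENNReal.ofReal (∑' j, p j * g (i + j)) := fun i => by
    rw [ENNReal.ofReal_tsum_of_nonneg (fun j => mul_nonneg (hp0 j) (hg0 _))
      (summable_mul_of_abs_le_s17 hp.summable fun j => hgC (i + j))]
    exact tsum_congr fun j => (ENNReal.ofReal_mul (hp0 j)).symm
  have hrec' : ∀ i, ∑' n, ennConvPow q n i = ⊤ := fun i => by
    obtain ⟨m, hm⟩ := hirr i
    refine tsum_ennConvPow_eq_top (m := m) ?_ ?_
    · simpa only [ofReal_convPow hp0 hp] using hrec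
    · rw [← ofReal_convPow hp0 hp]; exact (ENNReal.ofReal_pos.2 hm).ne'
  have hharm := congrFun (walkOp_eq_of_le_walkOp (tsum_ofReal_eq_one_of_hasSum hp0 hp).le hrec'
    ENNReal.ofReal_ne_top (fun i => ENNReal.ofReal_le_ofReal ((le_abs_self _).trans (hgC i)))
    fun i => (hwalk i).symm ▸ ENNReal.ofReal_le_ofReal (hsub i)) i
  rw [hwalk] at hharm
  exact (ENNReal.ofReal_eq_ofReal_iff (tsum_nonneg fun j => mul_nonneg (hp0 j) (hg0 _))
    (hg0 i)).1 hharm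

lemma apply_add_eq_of_convPow_ne_zero {β : Type*} {f : ZLat d → β}
    (hf : ∀ x j, p j ≠ 0 → f (x + j) = f x) {n : ℕ} {i : ZLat d} (hn : convPow p n i ≠ 0)
    (x : ZLat d) : f (x + i) = f x := by
  induction n generalizing i x with
  | zero =>
    have hi : i = 0 := by
      by_contra hi
      simp [convPow, hi] at hn
    rw [hi, add_zero]
  | succ n ih =>
    obtain ⟨j, hj⟩ : ∃ j, convPow p n j * p (i - j) ≠ 0 := by
      by_contra! h
      exact hn (by simp [convPow, h])
    calc f (x + i) = f (x + j + (i - j)) := by rw [add_assoc, add_sub_cancel]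
      _ = f (x + j) := hf _ _ (right_ne_zero_of_mul hj)
      _ = f x := ih (left_ne_zero_of_mul hj) x

end Lattice

theorem bounded_subharmonic_of_recurrent_walk_constant_general
    (d : ℕ) (p : ZLat d → ℝ)
    (hp_nonneg : ∀ i, 0 ≤ p i) (hp_sum : HasSum p 1)
    (hirr : ∀ i : ZLat d, ∃ n : ℕ, 0 < convPow p n i)
    (hrec : ∑' n : ℕ, ENNReal.ofReal (convPow p n 0) = ⊤)
    (f : ZLat d → ℝ) (hf_bdd : ∃ C, ∀ i, |f i| ≤ C) (hf_nonneg : ∀ i, 0 ≤ f i)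
    (hsub : ∀ i : ZLat d, f i ≤ ∑' j : ZLat d, p j * f (i + j)) :
    ∀ i j : ZLat d, f i = f j := by
  obtain ⟨C, hfC⟩ := hf_bdd
  have hsqC : ∀ i, |f i ^ 2| ≤ C ^ 2 := fun i => by
    rw [abs_pow]; exact pow_le_pow_left₀ (abs_nonneg _) (hfC i) 2
  have hsq := tsum_mul_apply_add_eq_of_le hp_nonneg hp_sum hirr hrec hsqC
    (fun i => sq_nonneg (f i)) (sq_le_tsum_mul_sq hp_nonneg hp_sum hfC hf_nonneg hsub)
  have hstep : ∀ x j, p j ≠ 0 → f (x + j) = f x := fun x _ hj =>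
    apply_add_eq_of_sq_harmonic hp_nonneg hp_sum hfC hf_nonneg hsub hsq x hj
  have hconst : ∀ i, f i = f 0 := fun i => by
    obtain ⟨n, hn⟩ := hirr i
    simpa using apply_add_eq_of_convPow_ne_zero hstep hn.ne' 0
  exact fun i j => (hconst i).trans (hconst j).symm

/-- Bounded nonnegative subharmonic functions of an irreducible
recurrent random walk on `ℤ^d` are constant. -/
theorem bounded_subharmonic_of_recurrent_walk_constant
    (d : ℕ) (hd : 1 ≤ d) (p : ZLat d → ℝ)
    (hp_nonneg : ∀ i, 0 ≤ p i) (hp_sum : HasSum p 1)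
    (hirr : ∀ i : ZLat d, ∃ n : ℕ, 0 < convPow p n i)
    (hrec : ∑' n : ℕ, ENNReal.ofReal (convPow p n 0) = ⊤)
    (f : ZLat d → ℝ) (hf_bdd : ∃ C, ∀ i, |f i| ≤ C) (hf_nonneg : ∀ i, 0 ≤ f i)
    (hsub : ∀ i : ZLat d, f i ≤ ∑' j : ZLat d, p j * f (i + j)) :
    ∀ i j : ZLat d, f i = f j :=
  bounded_subharmonic_of_recurrent_walk_constant_general d p hp_nonneg hp_sum hirr hrec f hf_bdd
    hf_nonneg hsub
end
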